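/- Let (S_n) be a real random walk with negative drift E[S_1] < 0 such that E[e^{γ S_1}] = 1 for some γ > 0 and E[e^{u S_1}] < ∞ for all u ∈ (−η₁, γ + η₂), for some η₁, η₂ > 0. Then for every α ≥ 0 there is a constant c'' > 0 such that for all L > 1 and all a ∈ [0, L]: E_a[ ∑_{ℓ=0}^{min(τ_0^-, τ_L^+)} (1 + L − S_ℓ)^α e^{γ S_ℓ} ] ≤ c'' · e^{γ a} · (1 + L − a)^{1+α}. -/

import Mathlib

open MeasureTheory ProbabilityTheory Filter Topology Real
open scoped ENNReal NNReal

variable {Ω : Type*} [MeasurableSpace Ω]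

/-- The random walk started at `x` with increments `X`. -/
noncomputable def walk (X : ℕ → Ω → ℝ) (x : ℝ) (n : ℕ) (ω : Ω) : ℝ :=
  x + ∑ i ∈ Finset.range n, X i ω

/-- `τ_a^+`: the first time the walk (started at `x`) exceeds level `a`, as an
extended natural number (`⊤` if the walk never exceeds `a`). -/
noncomputable def hitAbove (X : ℕ → Ω → ℝ) (x a : ℝ) (ω : Ω) : ℕ∞ :=
  ⨅ (n : ℕ) (_ : a < walk X x n ω), (n : ℕ∞)

/-- `τ_a^-`: the first time the walk (started at `x`) goes below level `a`. -/
noncomputable def hitBelow (X : ℕ → Ω → ℝ) (x a : ℝ) (ω : Ω) : ℕ∞ :=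
  ⨅ (n : ℕ) (_ : walk X x n ω < a), (n : ℕ∞)

/-- `S_{τ_a^+}`: the walk stopped when it first exceeds `a` (junk value if never). -/
noncomputable def stopAbove (X : ℕ → Ω → ℝ) (x a : ℝ) (ω : Ω) : ℝ :=
  walk X x (hitAbove X x a ω).toNat ω

/-- `S_{τ_a^-}`: the walk stopped when it first goes below `a` (junk value if never). -/
noncomputable def stopBelow (X : ℕ → Ω → ℝ) (x a : ℝ) (ω : Ω) : ℝ :=
  walk X x (hitBelow X x a ω).toNat ω

/-- A real random variable has non-arithmetic distribution: its law is not
supported on any lattice `hℤ`. -/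
def NonArithmetic (Y : Ω → ℝ) (μ : Measure Ω) : Prop :=
  ¬ ∃ h : ℝ, ∀ᵐ ω ∂μ, ∃ k : ℤ, Y ω = k * h

/-!
Tilting the increment law by `e^{γy}` turns the negative drift into the positive mean
`m = E[Y e^{γY}]`. Hence, in the variable `t = 1 + L - y`, the weight `K (t + R)^{1+α}` loses about
`(1 + α) m K t^α` per step of the tilted walk, so `Φ(y) = e^{γy} K (1 + L - y + R)^{1+α}` satisfies
`G(y) + E[Φ(y + Y)] ≤ Φ(y)` on `[0, L]` for `G(y) = (1 + L - y)^α e^{γy}` once `K, R` are large.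
Summing this drift inequality along the walk killed on leaving `[0, L]` bounds the expected sum
of `G` by `Φ(a) ≤ c e^{γa} (1 + L - a)^{1+α}`.
-/

namespace Real

lemma exp_mul_one_sub_le_one (x : ℝ) : exp x * (1 - x) ≤ 1 := by
  calc exp x * (1 - x) ≤ exp x * exp (-x) := by gcongr; exact one_sub_le_exp_neg x
    _ = 1 := by rw [← exp_add, add_neg_cancel, exp_zero]

lemma exp_mul_one_sub_lt_one {x : ℝ} (hx : x ≠ 0) : exp x * (1 - x) < 1 := by
  calc exp x * (1 - x) < exp x * exp (-x) := by
        gcongr; linarith [add_one_lt_exp (neg_ne_zero.2 hx)]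
    _ = 1 := by rw [← exp_add, add_neg_cancel, exp_zero]

lemma exp_neg_le_one_sub_add_sq {x : ℝ} (hx : 0 ≤ x) : exp (-x) ≤ 1 - x + x ^ 2 := by
  have h := exp_mul_one_sub_le_one (-x)
  nlinarith [exp_pos (-x)]

lemma one_add_rpow_le_one_add_mul_rpow {α v : ℝ} (hα : 0 ≤ α) (hv : 0 ≤ v) :
    (1 + v) ^ α ≤ 1 + α * v * (1 + v) ^ α := by
  have hB : 0 ≤ (1 + v) ^ α := rpow_nonneg (by linarith) _
  rcases le_or_gt 1 (α * v) with h | h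
  · nlinarith
  · have hexp : (1 + v) ^ α ≤ exp (α * v) := by
      calc (1 + v) ^ α ≤ exp v ^ α := by gcongr; linarith [add_one_le_exp v]
        _ = exp (α * v) := by rw [← exp_mul, mul_comm]
    nlinarith [exp_mul_one_sub_le_one (α * v)]

lemma one_sub_rpow_one_add_le {α r : ℝ} (hα : 0 ≤ α) (hr : r ≤ 1) :
    (1 - r) ^ (1 + α) ≤ 1 - (1 + α) * r + α * (1 + α) * r ^ 2 * (1 + |r|) ^ α := by
  have h1α : 1 + α ≠ 0 := by positivity
  rcases le_or_gt 0 r with h0 | h0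
  · have hpow : (1 - r) ^ α ≤ 1 - α * r + (α * r) ^ 2 :=
      calc (1 - r) ^ α ≤ exp (-r) ^ α := rpow_le_rpow (by linarith) (one_sub_le_exp_neg r) hα
        _ = exp (-(α * r)) := by rw [← exp_mul]; ring_nf
        _ ≤ 1 - α * r + (α * r) ^ 2 := exp_neg_le_one_sub_add_sq (by positivity)
    have hone : 1 ≤ (1 + |r|) ^ α := one_le_rpow (by linarith [abs_nonneg r]) hα
    rw [rpow_one_add' (by linarith) h1α]
    nlinarith [mul_le_mul_of_nonneg_left hpow (by linarith : 0 ≤ 1 - r),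
      mul_nonneg (mul_nonneg hα (by linarith : (0:ℝ) ≤ 1 + α)) (sq_nonneg r),
      mul_nonneg (mul_nonneg (sq_nonneg α) (pow_two_nonneg r)) h0]
  · obtain ⟨v, hv, rfl⟩ : ∃ v, 0 < v ∧ r = -v := ⟨-r, by linarith, by ring⟩
    have hB := one_add_rpow_le_one_add_mul_rpow hα hv.le
    rw [abs_neg, abs_of_pos hv, sub_neg_eq_add, rpow_one_add' (by linarith) h1α]
    nlinarith [mul_le_mul_of_nonneg_left hB (mul_nonneg hα hv.le)]

lemma sub_rpow_one_add_le {α s x : ℝ} (hα : 0 ≤ α) (hs : 1 ≤ s) (hx : x ≤ s) :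
    (s - x) ^ (1 + α) ≤
      s ^ (1 + α) - (1 + α) * s ^ α * x + α * (1 + α) * s ^ (α - 1) * (x ^ 2 * (1 + |x|) ^ α) := by
  have hs0 : 0 < s := by linarith
  have hr : x / s ≤ 1 := (div_le_one hs0).2 hx
  have hrx : |x / s| ≤ |x| := by
    rw [abs_div, abs_of_pos hs0]; exact div_le_self (abs_nonneg x) hs
  have hkey := mul_le_mul_of_nonneg_left (one_sub_rpow_one_add_le hα hr)
    (rpow_nonneg hs0.le (1 + α))
  have hsub : s - x = s * (1 - x / s) := by field_simp
  have hpow1 : s ^ α = s ^ (α - 1) * s := by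
    rw [← rpow_add_one hs0.ne']; ring_nf
  have hpow2 : s ^ (1 + α) = s * s ^ α := rpow_one_add' hs0.le (by positivity)
  have hrem : (1 + |x / s|) ^ α ≤ (1 + |x|) ^ α := by gcongr
  rw [hsub, mul_rpow hs0.le (by linarith)]
  calc s ^ (1 + α) * (1 - x / s) ^ (1 + α)
      ≤ s ^ (1 + α) * (1 - (1 + α) * (x / s) + α * (1 + α) * (x / s) ^ 2 * (1 + |x / s|) ^ α) :=
        hkey
    _ = s ^ (1 + α) - (1 + α) * s ^ α * x
          + α * (1 + α) * s ^ (α - 1) * (x ^ 2 * (1 + |x / s|) ^ α) := by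
        rw [hpow2, hpow1]; field_simp
    _ ≤ _ := by gcongr

lemma exists_one_add_abs_rpow_le_mul_exp {β δ : ℝ} (hβ : 0 ≤ β) (hδ : 0 < δ) :
    ∃ C, ∀ x, (1 + |x|) ^ β ≤ C * (exp (δ * x) + exp (-δ * x)) := by
  set d := δ / (β + δ)
  have hd : 0 < d := by positivity
  have hd1 : d ≤ 1 := (div_le_one (by positivity)).2 (by linarith)
  have hdβ : d * β ≤ δ := by
    rw [div_mul_eq_mul_div, div_le_iff₀ (by positivity)]; nlinarith
  refine ⟨(1 / d) ^ β, fun x => ?_⟩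
  have hlin : 1 + |x| ≤ 1 / d * exp (d * |x|) := by
    rw [div_mul_eq_mul_div, one_mul, le_div_iff₀ hd]
    nlinarith [add_one_le_exp (d * |x|), abs_nonneg x]
  calc (1 + |x|) ^ β ≤ (1 / d * exp (d * |x|)) ^ β := by gcongr
    _ = (1 / d) ^ β * exp (d * β * |x|) := by
        rw [mul_rpow (by positivity) (exp_pos _).le, ← exp_mul]; ring_nf
    _ ≤ (1 / d) ^ β * exp (δ * |x|) := by gcongr
    _ ≤ (1 / d) ^ β * (exp (δ * x) + exp (-δ * x)) := by
        gcongr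
        rw [← abs_of_pos hδ, ← abs_mul, abs_of_pos hδ, neg_mul]
        exact exp_abs_le _

end Real

section TiltedMoments

variable {μ : Measure Ω} {Y : Ω → ℝ} {γ : ℝ}

lemma integrable_one_add_abs_rpow_mul_exp {δ : ℝ} (hY : Measurable Y) (hδ : 0 < δ)
    (hlo : Integrable (fun ω => exp ((γ - δ) * Y ω)) μ)
    (hhi : Integrable (fun ω => exp ((γ + δ) * Y ω)) μ) {β : ℝ} (hβ : 0 ≤ β) :
    Integrable (fun ω => (1 + |Y ω|) ^ β * exp (γ * Y ω)) μ := by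
  obtain ⟨C, hC⟩ := exists_one_add_abs_rpow_le_mul_exp hβ hδ
  refine ((hhi.add hlo).const_mul C).mono' (by fun_prop) (ae_of_all _ fun ω => ?_)
  rw [norm_of_nonneg (by positivity)]
  calc (1 + |Y ω|) ^ β * exp (γ * Y ω)
      ≤ C * (exp (δ * Y ω) + exp (-δ * Y ω)) * exp (γ * Y ω) := by gcongr; exact hC _
    _ = C * (exp ((γ + δ) * Y ω) + exp ((γ - δ) * Y ω)) := by
        rw [mul_assoc, add_mul, ← exp_add, ← exp_add]; ring_nf

lemma integrable_mul_exp (hY : Measurable Y)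
    (hmom : Integrable (fun ω => (1 + |Y ω|) ^ (1 : ℝ) * exp (γ * Y ω)) μ) :
    Integrable (fun ω => Y ω * exp (γ * Y ω)) μ := by
  refine hmom.mono' (by fun_prop) (ae_of_all _ fun ω => ?_)
  rw [norm_mul, norm_of_nonneg (exp_pos _).le, rpow_one]
  gcongr
  rw [Real.norm_eq_abs]; linarith

lemma integrable_sq_mul_rpow_mul_exp (hY : Measurable Y) {α : ℝ} (hα : 0 ≤ α)
    (hmom : Integrable (fun ω => (1 + |Y ω|) ^ (2 + α) * exp (γ * Y ω)) μ) :
    Integrable (fun ω => Y ω ^ 2 * (1 + |Y ω|) ^ α * exp (γ * Y ω)) μ := by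
  refine hmom.mono' (by fun_prop) (ae_of_all _ fun ω => ?_)
  have h1 : 0 ≤ 1 + |Y ω| := by positivity
  have hsq : Y ω ^ 2 ≤ (1 + |Y ω|) ^ 2 := by nlinarith [abs_nonneg (Y ω), sq_abs (Y ω)]
  rw [norm_of_nonneg (by positivity), rpow_add' h1 (by positivity), rpow_two]
  exact mul_le_mul_of_nonneg_right (mul_le_mul_of_nonneg_right hsq (by positivity)) (exp_pos _).le

/-- Since `1 - e^x + x e^x ≥ 0` with equality only at `x = 0`, the normalisation
`E[e^{γY}] = 1` forces `E[Y e^{γY}] ≥ 0`, with equality only if `Y = 0` almost surely. -/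
lemma integral_mul_exp_pos [IsProbabilityMeasure μ] (hγ : 0 < γ) (hdrift : ∫ ω, Y ω ∂μ < 0)
    (hγ1 : ∫ ω, exp (γ * Y ω) ∂μ = 1) (hint : Integrable (fun ω => Y ω * exp (γ * Y ω)) μ) :
    0 < ∫ ω, Y ω * exp (γ * Y ω) ∂μ := by
  have hexp : Integrable (fun ω => exp (γ * Y ω)) μ := .of_integral_ne_zero (by simp [hγ1])
  set g : Ω → ℝ := fun ω => 1 - exp (γ * Y ω) + γ * (Y ω * exp (γ * Y ω))
  have hg0 : 0 ≤ g := fun ω => by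
    have := exp_mul_one_sub_le_one (γ * Y ω)
    simp only [g, Pi.zero_apply]; nlinarith
  have hsub : Integrable (fun ω => 1 - exp (γ * Y ω)) μ := (integrable_const 1).sub hexp
  have hgint : Integrable g μ := hsub.add (hint.const_mul γ)
  have hg : ∫ ω, g ω ∂μ = γ * ∫ ω, Y ω * exp (γ * Y ω) ∂μ := by
    simp only [g]
    rw [integral_add hsub (hint.const_mul γ),
      integral_sub (integrable_const 1) hexp, integral_const_mul, hγ1]
    simp
  by_contra! hm
  have hg_ae : g =ᵐ[μ] 0 := (integral_eq_zero_iff_of_nonneg hg0 hgint).1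
    (le_antisymm (by rw [hg]; nlinarith) (integral_nonneg hg0))
  have hY : Y =ᵐ[μ] 0 := hg_ae.mono fun ω hω => by
    by_contra hne
    have := exp_mul_one_sub_lt_one (mul_ne_zero hγ.ne' hne)
    simp only [g, Pi.zero_apply] at hω
    linarith
  simp [integral_congr_ae hY] at hdrift

end TiltedMoments

section TruncatedMoment

variable {μ : Measure Ω} {Y : Ω → ℝ} {γ α : ℝ}

lemma integrableOn_exp_mul_sub_rpow (hY : Measurable Y) {β : ℝ} (hβ : 0 ≤ β)
    (hmom : Integrable (fun ω => (1 + |Y ω|) ^ β * exp (γ * Y ω)) μ) {s : ℝ} (hs : 1 ≤ s) :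
    IntegrableOn (fun ω => exp (γ * Y ω) * (s - Y ω) ^ β) {ω | Y ω ≤ s - 1} μ := by
  refine (hmom.const_mul (s ^ β)).integrableOn.mono' (by fun_prop) ?_
  refine ae_restrict_of_forall_mem (hY measurableSet_Iic) fun ω (hω : Y ω ≤ s - 1) => ?_
  have h0 : 0 ≤ s - Y ω := by linarith
  rw [norm_of_nonneg (by positivity)]
  calc exp (γ * Y ω) * (s - Y ω) ^ β ≤ exp (γ * Y ω) * (s * (1 + |Y ω|)) ^ β := by
        gcongr; nlinarith [neg_abs_le (Y ω), abs_nonneg (Y ω)]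
    _ = s ^ β * ((1 + |Y ω|) ^ β * exp (γ * Y ω)) := by
        rw [mul_rpow (by linarith) (by positivity)]; ring

lemma setIntegral_exp_mul_sub_rpow_le (hY : Measurable Y) (hα : 0 ≤ α)
    (hint₀ : Integrable (fun ω => exp (γ * Y ω)) μ)
    (hint₁ : Integrable (fun ω => Y ω * exp (γ * Y ω)) μ)
    (hint₂ : Integrable (fun ω => Y ω ^ 2 * (1 + |Y ω|) ^ α * exp (γ * Y ω)) μ)
    {s : ℝ} (hs : 1 ≤ s) :
    ∫ ω in {ω | Y ω ≤ s - 1}, exp (γ * Y ω) * (s - Y ω) ^ (1 + α) ∂μ ≤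
      s ^ (1 + α) * ∫ ω in {ω | Y ω ≤ s - 1}, exp (γ * Y ω) ∂μ
        - (1 + α) * s ^ α * ∫ ω in {ω | Y ω ≤ s - 1}, Y ω * exp (γ * Y ω) ∂μ
        + α * (1 + α) * s ^ (α - 1) *
          ∫ ω in {ω | Y ω ≤ s - 1}, Y ω ^ 2 * (1 + |Y ω|) ^ α * exp (γ * Y ω) ∂μ := by
  set E := {ω | Y ω ≤ s - 1}
  have hE : MeasurableSet E := hY measurableSet_Iic
  have hint₀' := hint₀.const_mul (s ^ (1 + α))
  have hint₁' := hint₁.const_mul ((1 + α) * s ^ α)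
  have hint₂' := hint₂.const_mul (α * (1 + α) * s ^ (α - 1))
  have hint₀₁ : Integrable (fun ω => s ^ (1 + α) * exp (γ * Y ω)
      - (1 + α) * s ^ α * (Y ω * exp (γ * Y ω))) μ := hint₀'.sub hint₁'
  have hint : Integrable (fun ω => s ^ (1 + α) * exp (γ * Y ω)
      - (1 + α) * s ^ α * (Y ω * exp (γ * Y ω))
      + α * (1 + α) * s ^ (α - 1) * (Y ω ^ 2 * (1 + |Y ω|) ^ α * exp (γ * Y ω))) μ :=
    hint₀₁.add hint₂'
  have hpt : ∀ ω ∈ E, exp (γ * Y ω) * (s - Y ω) ^ (1 + α) ≤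
      s ^ (1 + α) * exp (γ * Y ω) - (1 + α) * s ^ α * (Y ω * exp (γ * Y ω))
        + α * (1 + α) * s ^ (α - 1) * (Y ω ^ 2 * (1 + |Y ω|) ^ α * exp (γ * Y ω)) := by
    intro ω (hω : Y ω ≤ s - 1)
    have := mul_le_mul_of_nonneg_left (sub_rpow_one_add_le hα hs (by linarith : Y ω ≤ s))
      (exp_pos (γ * Y ω)).le
    linarith
  calc ∫ ω in E, exp (γ * Y ω) * (s - Y ω) ^ (1 + α) ∂μ
      ≤ ∫ ω in E, (s ^ (1 + α) * exp (γ * Y ω) - (1 + α) * s ^ α * (Y ω * exp (γ * Y ω))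
          + α * (1 + α) * s ^ (α - 1) * (Y ω ^ 2 * (1 + |Y ω|) ^ α * exp (γ * Y ω))) ∂μ :=
        integral_mono_of_nonneg
          (ae_restrict_of_forall_mem hE fun ω (hω : Y ω ≤ s - 1) =>
            mul_nonneg (exp_pos _).le (rpow_nonneg (by linarith) _))
          hint.integrableOn (ae_restrict_of_forall_mem hE hpt)
    _ = _ := by
        rw [integral_add hint₀₁.integrableOn hint₂'.integrableOn,
          integral_sub hint₀'.integrableOn hint₁'.integrableOn,
          integral_const_mul, integral_const_mul, integral_const_mul]

lemma tendsto_setIntegral_le_sub_one (hY : Measurable Y) {f : Ω → ℝ} (hf : Integrable f μ) :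
    Tendsto (fun s => ∫ ω in {ω | Y ω ≤ s - 1}, f ω ∂μ) atTop (𝓝 (∫ ω, f ω ∂μ)) := by
  have hU : ⋃ s : ℝ, {ω | Y ω ≤ s - 1} = Set.univ :=
    Set.eq_univ_of_forall fun ω => Set.mem_iUnion.2 ⟨Y ω + 1, by simp⟩
  have hf' : IntegrableOn f (⋃ s : ℝ, {ω | Y ω ≤ s - 1}) μ := by rw [hU]; exact hf.integrableOn
  have := tendsto_setIntegral_of_monotone (s := fun s : ℝ => {ω | Y ω ≤ s - 1})
    (fun s => hY measurableSet_Iic)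
    (fun s t hst ω (hω : Y ω ≤ s - 1) => (by linarith : Y ω ≤ t - 1)) hf'
  rwa [hU, Measure.restrict_univ] at this

/-- The tilted mean `m = E[Y e^{γY}]` is positive, so for large `s` the first-order term
`-(1 + α) s^α m` of the expansion of `(s - Y) ^ (1 + α)` dominates the second-order term,
which is `O(s^(α - 1))`. -/
theorem exists_setIntegral_exp_mul_sub_rpow_le [IsProbabilityMeasure μ] (hY : Measurable Y)
    (hγ : 0 < γ) (hdrift : ∫ ω, Y ω ∂μ < 0) (hγ1 : ∫ ω, exp (γ * Y ω) ∂μ = 1)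
    (hmom : ∀ β : ℝ, 0 ≤ β → Integrable (fun ω => (1 + |Y ω|) ^ β * exp (γ * Y ω)) μ)
    (hα : 0 ≤ α) :
    ∃ c > 0, ∀ᶠ s in atTop,
      ∫ ω in {ω | Y ω ≤ s - 1}, exp (γ * Y ω) * (s - Y ω) ^ (1 + α) ∂μ ≤
        s ^ (1 + α) - c * s ^ α := by
  have hint₀ : Integrable (fun ω => exp (γ * Y ω)) μ := .of_integral_ne_zero (by simp [hγ1])
  have hint₁ := integrable_mul_exp hY (hmom 1 zero_le_one)
  have hint₂ := integrable_sq_mul_rpow_mul_exp hY hα (hmom _ (by positivity))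
  set m := ∫ ω, Y ω * exp (γ * Y ω) ∂μ
  have hm : 0 < m := integral_mul_exp_pos hγ hdrift hγ1 hint₁
  set M := ∫ ω, Y ω ^ 2 * (1 + |Y ω|) ^ α * exp (γ * Y ω) ∂μ
  refine ⟨(1 + α) * m / 2, by positivity, ?_⟩
  have hnear : ∀ᶠ s in atTop, 3 / 4 * m ≤ ∫ ω in {ω | Y ω ≤ s - 1}, Y ω * exp (γ * Y ω) ∂μ :=
    (tendsto_setIntegral_le_sub_one hY hint₁).eventually (eventually_ge_nhds (by linarith))
  have hfar : ∀ᶠ s in atTop, α * M ≤ m / 4 * s :=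
    (tendsto_id.const_mul_atTop (by positivity : 0 < m / 4)).eventually_ge_atTop (α * M)
  filter_upwards [hnear, hfar, eventually_ge_atTop 1] with s hnear hfar hs
  set E := {ω | Y ω ≤ s - 1}
  have hE₀ : ∫ ω in E, exp (γ * Y ω) ∂μ ≤ 1 :=
    hγ1 ▸ setIntegral_le_integral hint₀ (ae_of_all _ fun _ => (exp_pos _).le)
  have hE₂ : ∫ ω in E, Y ω ^ 2 * (1 + |Y ω|) ^ α * exp (γ * Y ω) ∂μ ≤ M :=
    setIntegral_le_integral hint₂ (ae_of_all _ fun _ => by positivity)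
  have hsα : s ^ (α - 1) * s = s ^ α := by rw [← rpow_add_one (by linarith)]; ring_nf
  have h₀ := mul_le_mul_of_nonneg_left hE₀ (rpow_nonneg (by linarith : 0 ≤ s) (1 + α))
  have h₁ := mul_le_mul_of_nonneg_left hnear (by positivity : 0 ≤ (1 + α) * s ^ α)
  have h₂ := mul_le_mul_of_nonneg_left hE₂ (by positivity : 0 ≤ α * (1 + α) * s ^ (α - 1))
  have h₃ := mul_le_mul_of_nonneg_left hfar (by positivity : 0 ≤ (1 + α) * s ^ (α - 1))
  calc _ ≤ _ := setIntegral_exp_mul_sub_rpow_le hY hα hint₀ hint₁ hint₂ hs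
    _ ≤ s ^ (1 + α) - (1 + α) * m / 2 * s ^ α := by
        rw [← hsα] at h₁ ⊢; linarith

end TruncatedMoment

/-- The Lyapunov function of the tilted walk in the variable `t = 1 + L - y`; for `t < 1`
(above level `L`) it only has to dominate `t ^ α`. -/
noncomputable def lyapunovWeight (K R α t : ℝ) : ℝ :=
  if 1 ≤ t then K * (t + R) ^ (1 + α) else (2 - t) ^ α

section LyapunovWeight

variable {K R α t : ℝ}

@[fun_prop]
lemma measurable_lyapunovWeight : Measurable (lyapunovWeight K R α) :=
  Measurable.ite measurableSet_Ici (by fun_prop) (by fun_prop)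

lemma lyapunovWeight_of_one_le (ht : 1 ≤ t) : lyapunovWeight K R α t = K * (t + R) ^ (1 + α) :=
  if_pos ht

lemma lyapunovWeight_of_lt_one (ht : t < 1) : lyapunovWeight K R α t = (2 - t) ^ α :=
  if_neg ht.not_ge

lemma lyapunovWeight_nonneg (hK : 0 ≤ K) (hR : 0 ≤ R) (t : ℝ) : 0 ≤ lyapunovWeight K R α t := by
  rcases le_or_gt 1 t with ht | ht
  · rw [lyapunovWeight_of_one_le ht]
    have : 0 ≤ t + R := by linarith
    positivity
  · rw [lyapunovWeight_of_lt_one ht]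
    exact rpow_nonneg (by linarith) _

lemma rpow_le_lyapunovWeight (hK : 1 ≤ K) (hR : 0 ≤ R) (hα : 0 ≤ α) (t : ℝ) :
    t ^ α ≤ lyapunovWeight K R α t := by
  rcases le_or_gt 1 t with ht | ht
  · rw [lyapunovWeight_of_one_le ht]
    calc t ^ α ≤ t ^ (1 + α) := rpow_le_rpow_of_exponent_le ht (by linarith)
      _ ≤ (t + R) ^ (1 + α) := by gcongr; linarith
      _ ≤ K * (t + R) ^ (1 + α) := le_mul_of_one_le_left (rpow_nonneg (by linarith) _) hK
  · rw [lyapunovWeight_of_lt_one ht]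
    calc t ^ α ≤ |t| ^ α := (le_abs_self _).trans (abs_rpow_le_abs_rpow t α)
      _ ≤ (2 - t) ^ α := by gcongr; exact abs_le.2 ⟨by linarith, by linarith⟩

lemma lyapunovWeight_le (hK : 0 ≤ K) (hR : 0 ≤ R) (hα : 0 ≤ α) (ht : 1 ≤ t) :
    lyapunovWeight K R α t ≤ K * (1 + R) ^ (1 + α) * t ^ (1 + α) := by
  rw [lyapunovWeight_of_one_le ht, mul_assoc, ← mul_rpow (by positivity) (by linarith)]
  gcongr
  nlinarith

lemma lyapunovWeight_sub_mul_exp_le (hK : 0 ≤ K) (hR : 0 ≤ R) (hα : 0 ≤ α) (ht : 1 ≤ t)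
    (γ y : ℝ) :
    lyapunovWeight K R α (t - y) * exp (γ * y) ≤
      K * (Set.Iic (t + R - 1)).indicator (fun y => exp (γ * y) * (t + R - y) ^ (1 + α)) y
        + (1 + |y|) ^ α * exp (γ * y) := by
  rcases le_or_gt y (t - 1) with hy | hy
  · rw [lyapunovWeight_of_one_le (by linarith), Set.indicator_of_mem (by simp; linarith),
      show t - y + R = t + R - y by ring]
    have : 0 ≤ (1 + |y|) ^ α * exp (γ * y) := by positivity
    linarith
  · rw [lyapunovWeight_of_lt_one (by linarith)]
    have hind : 0 ≤ (Set.Iic (t + R - 1)).indicator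
        (fun y => exp (γ * y) * (t + R - y) ^ (1 + α)) y := by
      rw [Set.indicator_apply]; split_ifs with h
      · exact mul_nonneg (exp_pos _).le (rpow_nonneg (by simp at h; linarith) _)
      · rfl
    have : (2 - (t - y)) ^ α ≤ (1 + |y|) ^ α := by
      gcongr
      · linarith
      · linarith [le_abs_self y]
    nlinarith [mul_le_mul_of_nonneg_right this (exp_pos (γ * y)).le]

variable {μ : Measure Ω} {Y : Ω → ℝ} {γ : ℝ}

lemma integral_lyapunovWeight_sub_mul_exp_le (hY : Measurable Y)
    (hmom : ∀ β : ℝ, 0 ≤ β → Integrable (fun ω => (1 + |Y ω|) ^ β * exp (γ * Y ω)) μ)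
    (hK : 0 ≤ K) (hR : 0 ≤ R) (hα : 0 ≤ α) (ht : 1 ≤ t) :
    Integrable (fun ω => lyapunovWeight K R α (t - Y ω) * exp (γ * Y ω)) μ ∧
      ∫ ω, lyapunovWeight K R α (t - Y ω) * exp (γ * Y ω) ∂μ ≤
        K * ∫ ω in {ω | Y ω ≤ t + R - 1}, exp (γ * Y ω) * (t + R - Y ω) ^ (1 + α) ∂μ
          + ∫ ω, (1 + |Y ω|) ^ α * exp (γ * Y ω) ∂μ := by
  set E := {ω | Y ω ≤ t + R - 1}
  have hE : MeasurableSet E := hY measurableSet_Iic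
  have hind : Integrable (E.indicator fun ω => exp (γ * Y ω) * (t + R - Y ω) ^ (1 + α)) μ :=
    (integrableOn_exp_mul_sub_rpow hY (by linarith) (hmom _ (by linarith))
      (by linarith)).integrable_indicator hE
  set bound := fun ω => K * E.indicator (fun ω => exp (γ * Y ω) * (t + R - Y ω) ^ (1 + α)) ω
    + (1 + |Y ω|) ^ α * exp (γ * Y ω)
  have hbound : Integrable bound μ := (hind.const_mul K).add (hmom α hα)
  have hle : ∀ ω, lyapunovWeight K R α (t - Y ω) * exp (γ * Y ω) ≤ bound ω := fun ω =>
    (lyapunovWeight_sub_mul_exp_le hK hR hα ht γ (Y ω)).trans_eq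
      (by rw [← Set.indicator_comp_right]; rfl)
  have hint : Integrable (fun ω => lyapunovWeight K R α (t - Y ω) * exp (γ * Y ω)) μ :=
    hbound.mono' (by fun_prop) (ae_of_all _ fun ω => by
      rw [norm_of_nonneg (mul_nonneg (lyapunovWeight_nonneg hK hR _) (exp_pos _).le)]
      exact hle ω)
  refine ⟨hint, (integral_mono hint hbound hle).trans_eq ?_⟩
  rw [integral_add (hind.const_mul K) (hmom α hα), integral_const_mul, integral_indicator hE]

/-- The first-order drift `-c K s^α` of the truncated moment at `s = t + R` pays for `t ^ α`
and for the constant term once `K` is large and `R` is beyond the threshold of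
`exists_setIntegral_exp_mul_sub_rpow_le`. -/
theorem exists_lyapunovWeight_drift [IsProbabilityMeasure μ] (hY : Measurable Y) (hγ : 0 < γ)
    (hdrift : ∫ ω, Y ω ∂μ < 0) (hγ1 : ∫ ω, exp (γ * Y ω) ∂μ = 1)
    (hmom : ∀ β : ℝ, 0 ≤ β → Integrable (fun ω => (1 + |Y ω|) ^ β * exp (γ * Y ω)) μ)
    (hα : 0 ≤ α) :
    ∃ K R, 1 ≤ K ∧ 0 ≤ R ∧ ∀ t, 1 ≤ t →
      Integrable (fun ω => lyapunovWeight K R α (t - Y ω) * exp (γ * Y ω)) μ ∧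
      t ^ α + ∫ ω, lyapunovWeight K R α (t - Y ω) * exp (γ * Y ω) ∂μ ≤ lyapunovWeight K R α t := by
  obtain ⟨c, hc, hev⟩ := exists_setIntegral_exp_mul_sub_rpow_le hY hγ hdrift hγ1 hmom hα
  obtain ⟨S, hS⟩ := eventually_atTop.1 hev
  set C := ∫ ω, (1 + |Y ω|) ^ α * exp (γ * Y ω) ∂μ
  have hC : 0 ≤ C := integral_nonneg fun ω => by positivity
  set K := max 1 ((1 + C) / c)
  have hK : 1 ≤ K := le_max_left _ _
  have hKc : 1 + C ≤ K * c := (div_le_iff₀ hc).1 (le_max_right _ _)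
  refine ⟨K, |S|, hK, abs_nonneg S, fun t ht => ?_⟩
  obtain ⟨hint, hle⟩ :=
    integral_lyapunovWeight_sub_mul_exp_le (K := K) hY hmom (by linarith) (abs_nonneg S) hα ht
  refine ⟨hint, ?_⟩
  set s := t + |S|
  have hs : 1 ≤ s := by linarith [abs_nonneg S]
  have hq := mul_le_mul_of_nonneg_left (hS s (by linarith [le_abs_self S])) (by linarith : 0 ≤ K)
  have hts : t ^ α ≤ s ^ α := by gcongr; linarith [abs_nonneg S]
  have hCs := mul_le_mul_of_nonneg_left (one_le_rpow hs hα) hC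
  have hKcs := mul_le_mul_of_nonneg_right hKc (rpow_nonneg (by linarith : 0 ≤ s) α)
  rw [lyapunovWeight_of_one_le ht]
  nlinarith

lemma lintegral_lyapunovWeight_drift_le (hK : 0 ≤ K) (hR : 0 ≤ R)
    (hZ : ∀ t, 1 ≤ t →
      Integrable (fun ω => lyapunovWeight K R α (t - Y ω) * exp (γ * Y ω)) μ ∧
      t ^ α + ∫ ω, lyapunovWeight K R α (t - Y ω) * exp (γ * Y ω) ∂μ ≤ lyapunovWeight K R α t)
    {L y : ℝ} (hy : y ≤ L) :
    ENNReal.ofReal ((1 + L - y) ^ α * exp (γ * y))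
        + ∫⁻ ω, ENNReal.ofReal
            (lyapunovWeight K R α (1 + L - (y + Y ω)) * exp (γ * (y + Y ω))) ∂μ
      ≤ ENNReal.ofReal (lyapunovWeight K R α (1 + L - y) * exp (γ * y)) := by
  obtain ⟨hint, hle⟩ := hZ (1 + L - y) (by linarith)
  have hshift : ∀ ω, lyapunovWeight K R α (1 + L - (y + Y ω)) * exp (γ * (y + Y ω)) =
      exp (γ * y) * (lyapunovWeight K R α (1 + L - y - Y ω) * exp (γ * Y ω)) := fun ω => by
    rw [sub_add_eq_sub_sub, mul_add, exp_add]; ring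
  simp_rw [hshift]
  rw [← ofReal_integral_eq_lintegral_ofReal (hint.const_mul _) (ae_of_all _ fun ω =>
      mul_nonneg (exp_pos _).le (mul_nonneg (lyapunovWeight_nonneg hK hR _) (exp_pos _).le)),
    ← ENNReal.ofReal_add (mul_nonneg (rpow_nonneg (by linarith) _) (exp_pos _).le)
      (integral_nonneg fun ω =>
        mul_nonneg (exp_pos _).le (mul_nonneg (lyapunovWeight_nonneg hK hR _) (exp_pos _).le)),
    integral_const_mul]
  refine ENNReal.ofReal_le_ofReal ?_
  calc (1 + L - y) ^ α * exp (γ * y)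
        + exp (γ * y) * ∫ ω, lyapunovWeight K R α (1 + L - y - Y ω) * exp (γ * Y ω) ∂μ
      = exp (γ * y) * ((1 + L - y) ^ α
        + ∫ ω, lyapunovWeight K R α (1 + L - y - Y ω) * exp (γ * Y ω) ∂μ) := by ring
    _ ≤ exp (γ * y) * lyapunovWeight K R α (1 + L - y) := by gcongr
    _ = lyapunovWeight K R α (1 + L - y) * exp (γ * y) := mul_comm _ _

end LyapunovWeight

@[reducible] def pastIncrements {Ω' : Type*} (X : ℕ → Ω' → ℝ) (n : ℕ) : MeasurableSpace Ω' :=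
  ⨆ i ∈ Set.Iio n, MeasurableSpace.comap (X i) inferInstance

section WalkPaths

variable {Ω' : Type*} {X : ℕ → Ω' → ℝ} {x : ℝ}

@[simp]
lemma walk_zero (ω : Ω') : walk X x 0 ω = x := by simp [walk]

lemma walk_succ (n : ℕ) (ω : Ω') : walk X x (n + 1) ω = walk X x n ω + X n ω := by
  simp [walk, Finset.sum_range_succ, add_assoc]

lemma le_hitBelow_iff {a : ℝ} {ω : Ω'} {n : ℕ} :
    (n : ℕ∞) ≤ hitBelow X x a ω ↔ ∀ k < n, a ≤ walk X x k ω := by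
  simp only [hitBelow, le_iInf_iff, Nat.cast_le]
  exact ⟨fun h k hk => not_lt.1 fun h' => (h k h').not_gt hk,
    fun h k hk => not_lt.1 fun h' => (h k h').not_gt hk⟩

lemma le_hitAbove_iff {a : ℝ} {ω : Ω'} {n : ℕ} :
    (n : ℕ∞) ≤ hitAbove X x a ω ↔ ∀ k < n, walk X x k ω ≤ a := by
  simp only [hitAbove, le_iInf_iff, Nat.cast_le]
  exact ⟨fun h k hk => not_lt.1 fun h' => (h k h').not_gt hk,
    fun h k hk => not_lt.1 fun h' => (h k h').not_gt hk⟩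

lemma le_min_hitBelow_hitAbove_iff {lo hi : ℝ} {ω : Ω'} {n : ℕ} :
    (n : ℕ∞) ≤ min (hitBelow X x lo ω) (hitAbove X x hi ω) ↔
      ∀ k < n, walk X x k ω ∈ Set.Icc lo hi := by
  rw [le_min_iff, le_hitBelow_iff, le_hitAbove_iff]
  exact ⟨fun h k hk => ⟨h.1 k hk, h.2 k hk⟩,
    fun h => ⟨fun k hk => (h k hk).1, fun k hk => (h k hk).2⟩⟩

lemma measurable_walk_pastIncrements {k n : ℕ} (hk : k ≤ n) :
    Measurable[pastIncrements X n] (walk X x k) :=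
  measurable_const.add (Finset.measurable_sum _ fun i hi =>
    (comap_measurable (X i)).mono
      (le_iSup₂ (f := fun i (_ : i ∈ Set.Iio n) => MeasurableSpace.comap (X i) inferInstance) i
        (lt_of_lt_of_le (Finset.mem_range.1 hi) hk)) le_rfl)

lemma measurableSet_pastIncrements_forall_walk_mem {s : Set ℝ} (hs : MeasurableSet s)
    {m n : ℕ} (hmn : m ≤ n + 1) :
    MeasurableSet[pastIncrements X n] {ω | ∀ k < m, walk X x k ω ∈ s} := by
  simp only [Set.ofPred_forall]
  exact MeasurableSet.iInter fun k => MeasurableSet.iInter fun hk =>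
    measurable_walk_pastIncrements (by omega) hs

end WalkPaths

section RandomWalk

variable {X : ℕ → Ω → ℝ} {x : ℝ}

lemma pastIncrements_le (hmeas : ∀ i, Measurable (X i)) (n : ℕ) :
    pastIncrements X n ≤ ‹MeasurableSpace Ω› :=
  iSup₂_le fun i _ => (hmeas i).comap_le

lemma measurable_walk (hmeas : ∀ i, Measurable (X i)) (n : ℕ) : Measurable (walk X x n) :=
  (measurable_walk_pastIncrements le_rfl).mono (pastIncrements_le hmeas n) le_rfl

lemma lintegral_comp_eq_lintegral_lintegral_of_indepFun {β β' : Type*} [MeasurableSpace β]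
    [MeasurableSpace β'] {μ : Measure Ω} [IsFiniteMeasure μ] {f : Ω → β} {g : Ω → β'}
    (hf : Measurable f) (hg : Measurable g) (hfg : IndepFun f g μ) {F : β × β' → ℝ≥0∞}
    (hF : Measurable F) :
    ∫⁻ ω, F (f ω, g ω) ∂μ = ∫⁻ ω, ∫⁻ ω', F (f ω, g ω') ∂μ ∂μ := by
  rw [← lintegral_map hF (hf.prodMk hg),
    (indepFun_iff_map_prod_eq_prod_map_map hf.aemeasurable hg.aemeasurable).1 hfg,
    lintegral_prod _ hF.aemeasurable, lintegral_map hF.lintegral_prod_right' hf]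
  congr with ω
  exact lintegral_map (hF.comp measurable_prodMk_left) hg

lemma setLIntegral_comp_walk_succ {μ : Measure Ω} [IsFiniteMeasure μ]
    (hmeas : ∀ i, Measurable (X i)) (hindep : iIndepFun X μ)
    (hident : ∀ i, IdentDistrib (X i) (X 0) μ μ) {n : ℕ} {A : Set Ω}
    (hA : MeasurableSet[pastIncrements X n] A)
    {Φ : ℝ → ℝ≥0∞} (hΦ : Measurable Φ) :
    ∫⁻ ω in A, Φ (walk X x (n + 1) ω) ∂μ = ∫⁻ ω in A, ∫⁻ ω', Φ (walk X x n ω + X 0 ω') ∂μ ∂μ := by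
  have hindep_n : Indep (pastIncrements X n) (MeasurableSpace.comap (X n) inferInstance) μ := by
    have := indep_iSup_of_disjoint (fun i => (hmeas i).comap_le)
      ((iIndepFun_iff_iIndep _ _ _).1 hindep) (S := Set.Iio n) (T := {n}) (by simp)
    rwa [iSup_singleton] at this
  have hf : Measurable[pastIncrements X n]
      fun ω => (walk X x n ω, A.indicator (fun _ => (1 : ℝ≥0∞)) ω) :=
    (measurable_walk_pastIncrements le_rfl).prodMk (measurable_const.indicator hA)
  have key := lintegral_comp_eq_lintegral_lintegral_of_indepFun
    (hf.mono (pastIncrements_le hmeas n) le_rfl) (hmeas n)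
    ((IndepFun_iff_Indep _ _ _).2 (indep_of_indep_of_le_left hindep_n hf.comap_le))
    (F := fun p => p.1.2 * Φ (p.1.1 + p.2)) (by fun_prop)
  have hshift : ∀ y, ∫⁻ ω', Φ (y + X n ω') ∂μ = ∫⁻ ω', Φ (y + X 0 ω') ∂μ := fun y =>
    ((hident n).comp (hΦ.comp (measurable_const_add y))).lintegral_eq
  rw [← lintegral_indicator (pastIncrements_le hmeas n _ hA),
    ← lintegral_indicator (pastIncrements_le hmeas n _ hA)]
  calc ∫⁻ ω, A.indicator (fun ω => Φ (walk X x (n + 1) ω)) ω ∂μ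
      = ∫⁻ ω, A.indicator (fun _ => 1) ω * Φ (walk X x n ω + X n ω) ∂μ :=
        lintegral_congr fun ω => by by_cases hω : ω ∈ A <;> simp [hω, walk_succ]
    _ = ∫⁻ ω, ∫⁻ ω', A.indicator (fun _ => 1) ω * Φ (walk X x n ω + X n ω') ∂μ ∂μ := key
    _ = ∫⁻ ω, A.indicator (fun ω => ∫⁻ ω', Φ (walk X x n ω + X 0 ω') ∂μ) ω ∂μ :=
        lintegral_congr fun ω => by
          rw [lintegral_const_mul (f := fun ω' => Φ (walk X x n ω + X n ω'))
            _ (by fun_prop), hshift]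
          by_cases hω : ω ∈ A <;> simp [hω]

lemma ENNReal.tsum_le_of_add_le {I J : ℕ → ℝ≥0∞} (h : ∀ n, I n + J (n + 1) ≤ J n) :
    ∑' n, I n ≤ J 0 := by
  have key : ∀ N, ∑ n ∈ Finset.range N, I n + J N ≤ J 0 := by
    intro N
    induction N with
    | zero => simp
    | succ N ih =>
      calc ∑ n ∈ Finset.range (N + 1), I n + J (N + 1)
          = ∑ n ∈ Finset.range N, I n + (I N + J (N + 1)) := by
            rw [Finset.sum_range_succ, add_assoc]
        _ ≤ ∑ n ∈ Finset.range N, I n + J N := by gcongr; exact h N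
        _ ≤ J 0 := ih
  exact ENNReal.tsum_le_of_sum_range_le fun N => le_self_add.trans (key N)

/-- Foster–Lyapunov bound: by the drift inequality, `∑_{k<n} G(S_k) + Φ(S_n)` over the paths that
stay in `[lo, hi]` before time `n` has non-increasing expectation in `n`. -/
theorem lintegral_tsum_killed_walk_le {μ : Measure Ω} [IsProbabilityMeasure μ]
    (hmeas : ∀ i, Measurable (X i)) (hindep : iIndepFun X μ)
    (hident : ∀ i, IdentDistrib (X i) (X 0) μ μ) {G Φ : ℝ → ℝ≥0∞} (hG : Measurable G)
    (hΦ : Measurable Φ) {lo hi : ℝ} (hGΦ : ∀ y, G y ≤ Φ y)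
    (hdrift : ∀ y ∈ Set.Icc lo hi, G y + ∫⁻ ω, Φ (y + X 0 ω) ∂μ ≤ Φ y) (a : ℝ) :
    ∫⁻ ω, ∑' l : ℕ, (if (l : ℕ∞) ≤ min (hitBelow X a lo ω) (hitAbove X a hi ω)
        then G (walk X a l ω) else 0) ∂μ ≤ Φ a := by
  set E : ℕ → Set Ω := fun n => {ω | ∀ k < n, walk X a k ω ∈ Set.Icc lo hi}
  have hE : ∀ n, MeasurableSet (E n) := fun n => pastIncrements_le hmeas n _
    (measurableSet_pastIncrements_forall_walk_mem measurableSet_Icc n.le_succ)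
  have hE_succ : ∀ n, E (n + 1) = walk X a n ⁻¹' Set.Icc lo hi ∩ E n := fun n => by
    ext ω
    simp only [E, Set.mem_ofPred_eq, Set.mem_inter_iff, Set.mem_preimage, Nat.lt_succ_iff_lt_or_eq,
      or_imp, forall_and, forall_eq]
    exact and_comm
  have hGn : ∀ n, Measurable fun ω => G (walk X a n ω) := fun n =>
    hG.comp (measurable_walk hmeas n)
  set Ψ := fun y => ∫⁻ ω, Φ (y + X 0 ω) ∂μ
  have hGΨ : ∀ y, G y + (Set.Icc lo hi).indicator Ψ y ≤ Φ y := fun y => by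
    by_cases hy : y ∈ Set.Icc lo hi
    · rw [Set.indicator_of_mem hy]; exact hdrift y hy
    · rw [Set.indicator_of_notMem hy, add_zero]; exact hGΦ y
  have hstep : ∀ n, ∫⁻ ω in E n, G (walk X a n ω) ∂μ + ∫⁻ ω in E (n + 1), Φ (walk X a (n + 1) ω) ∂μ
      ≤ ∫⁻ ω in E n, Φ (walk X a n ω) ∂μ := fun n => by
    rw [setLIntegral_comp_walk_succ (A := E (n + 1)) hmeas hindep hident
        (measurableSet_pastIncrements_forall_walk_mem measurableSet_Icc le_rfl) hΦ, hE_succ,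
      ← setLIntegral_indicator (measurable_walk hmeas n measurableSet_Icc),
      ← lintegral_add_left (hGn n)]
    exact lintegral_mono fun ω => (congrArg _ (Set.indicator_comp_right _)).trans_le (hGΨ _)
  have hterm : ∀ (l : ℕ) ω, (if (l : ℕ∞) ≤ min (hitBelow X a lo ω) (hitAbove X a hi ω)
      then G (walk X a l ω) else 0) = (E l).indicator (fun ω => G (walk X a l ω)) ω := by
    intro l ω
    simp only [Set.indicator_apply, E, Set.mem_ofPred_eq, le_min_hitBelow_hitAbove_iff]
  simp_rw [hterm]
  rw [lintegral_tsum fun l => ((hGn l).indicator (hE l)).aemeasurable]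
  simp_rw [lintegral_indicator (hE _)]
  calc _ ≤ ∫⁻ ω in E 0, Φ (walk X a 0 ω) ∂μ := ENNReal.tsum_le_of_add_le hstep
    _ = Φ a := by simp [E]

end RandomWalk

/-- Lemma `lem:estsub`, (est7sub). For a random walk with negative drift
such that `E[e^{γ S_1}] = 1` and exponential moments on `(-η₁, γ + η₂)`: for every `α ≥ 0`
there is `c'' > 0` such that for all `L > 1` and `a ∈ [0, L]`,
`E_a[∑_{ℓ=0}^{min(τ_0^-, τ_L^+)} (1 + L - S_ℓ)^α e^{γ S_ℓ}] ≤ c'' e^{γ a} (1 + L - a)^{1+α}`. -/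
theorem negative_drift_two_sided_weighted_sum_bound
    (μ : Measure Ω) [IsProbabilityMeasure μ]
    (X : ℕ → Ω → ℝ) (hmeas : ∀ i, Measurable (X i))
    (hindep : iIndepFun X μ)
    (hident : ∀ i, IdentDistrib (X i) (X 0) μ μ)
    (hdrift : ∫ ω, X 0 ω ∂μ < 0)
    (γ η₁ η₂ : ℝ) (hγ : 0 < γ) (hη₁ : 0 < η₁) (hη₂ : 0 < η₂)
    (hγ1 : ∫ ω, Real.exp (γ * X 0 ω) ∂μ = 1)
    (hexp : ∀ u : ℝ, -η₁ < u → u < γ + η₂ →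
      Integrable (fun ω => Real.exp (u * X 0 ω)) μ)
    (α : ℝ) (hα : 0 ≤ α) :
    ∃ c : ℝ, 0 < c ∧ ∀ L : ℝ, 1 < L → ∀ a : ℝ, 0 ≤ a → a ≤ L →
      ∫⁻ ω, ∑' l : ℕ, (if (l : ℕ∞) ≤ min (hitBelow X a 0 ω) (hitAbove X a L ω)
          then ENNReal.ofReal ((1 + L - walk X a l ω) ^ α * Real.exp (γ * walk X a l ω))
          else 0) ∂μ
        ≤ ENNReal.ofReal (c * Real.exp (γ * a) * (1 + L - a) ^ (1 + α)) := by
  obtain ⟨δ, hδ, hδ₁, hδ₂⟩ : ∃ δ, 0 < δ ∧ -η₁ < γ - δ ∧ γ + δ < γ + η₂ :=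
    ⟨min (γ + η₁) η₂ / 2, by have := lt_min (by linarith : 0 < γ + η₁) hη₂; linarith,
      by linarith [min_le_left (γ + η₁) η₂], by linarith [min_le_right (γ + η₁) η₂]⟩
  have hmom : ∀ β : ℝ, 0 ≤ β → Integrable (fun ω => (1 + |X 0 ω|) ^ β * exp (γ * X 0 ω)) μ :=
    fun β => integrable_one_add_abs_rpow_mul_exp (hmeas 0) hδ
      (hexp _ hδ₁ (by linarith)) (hexp _ (by linarith) hδ₂)
  obtain ⟨K, R, hK, hR, hZ⟩ := exists_lyapunovWeight_drift (hmeas 0) hγ hdrift hγ1 hmom hα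
  refine ⟨K * (1 + R) ^ (1 + α), by positivity, fun L _ a _ haL => ?_⟩
  calc _ ≤ ENNReal.ofReal (lyapunovWeight K R α (1 + L - a) * exp (γ * a)) :=
        lintegral_tsum_killed_walk_le hmeas hindep hident
          (G := fun y => ENNReal.ofReal ((1 + L - y) ^ α * exp (γ * y)))
          (Φ := fun y => ENNReal.ofReal (lyapunovWeight K R α (1 + L - y) * exp (γ * y)))
          (by fun_prop) (by fun_prop)
          (fun y => ENNReal.ofReal_le_ofReal (by gcongr; exact rpow_le_lyapunovWeight hK hR hα _))
          (fun y hy => lintegral_lyapunovWeight_drift_le (by linarith) hR hZ hy.2) a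
    _ ≤ _ := ENNReal.ofReal_le_ofReal (by
        rw [mul_right_comm]
        gcongr
        exact lyapunovWeight_le (by linarith) hR hα (by linarith))
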